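/- arXiv:1609.09599 — 2 statements merged into one kernel-verified Lean document; each statement's English description precedes it below -/
import Mathlib

section
/- Let L be a finite set, β a partition of L with β strictly less than {L}, and γ a partition of L with γ ≤ β. Then ∑_{α ∈ Π_L, α ∧ β = γ} (-1)^{|α|-1}(|α|-1)! = 0, where α ∧ β denotes the meet (common refinement) in the partition lattice. -/
open Finset

/-- `α` is a set partition of `Fin m`: blocks are nonempty and every element lies
in exactly one block. -/
def IsSetPartition {m : ℕ} (α : Finset (Finset (Fin m))) : Prop :=
  (∀ J ∈ α, J.Nonempty) ∧ ∀ i : Fin m, ∃! J, J ∈ α ∧ i ∈ J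

/-- `α` refines `β`: every block of `α` is contained in some block of `β`.
This is the order `α ≤ β` on the partition lattice. -/
def Refines {m : ℕ} (α β : Finset (Finset (Fin m))) : Prop :=
  ∀ J ∈ α, ∃ J' ∈ β, J ⊆ J'

/-- The meet (common refinement) `α ∧ β` in the partition lattice: all nonempty
intersections of a block of `α` with a block of `β`. -/
def partMeet {m : ℕ} (α β : Finset (Finset (Fin m))) : Finset (Finset (Fin m)) :=
  ((α ×ˢ β).image fun p => p.1 ∩ p.2).erase ∅
open Finset

section Generic
open scoped Classical
variable {ι : Type*} [DecidableEq ι] [Fintype ι]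

/-- `π` is a partition of the finset `S`. -/
def IsPartOf (S : Finset ι) (π : Finset (Finset ι)) : Prop :=
  (∀ J ∈ π, J.Nonempty) ∧ (∀ J ∈ π, J ⊆ S) ∧ ∀ i ∈ S, ∃! J, J ∈ π ∧ i ∈ J

noncomputable def partsOf (S : Finset ι) : Finset (Finset (Finset ι)) :=
  Finset.univ.filter (fun π => IsPartOf S π)

lemma mem_partsOf {S : Finset ι} {π : Finset (Finset ι)} : π ∈ partsOf S ↔ IsPartOf S π := by
  simp [partsOf]

lemma IsPartOf.block_eq {S : Finset ι} {π : Finset (Finset ι)} (h : IsPartOf S π)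
    {J J' : Finset ι} {i : ι} (hJ : J ∈ π) (hJ' : J' ∈ π) (hi : i ∈ J) (hi' : i ∈ J') :
    J = J' := by
  obtain ⟨K, _, hK⟩ := h.2.2 i (h.2.1 J hJ hi)
  rw [hK J ⟨hJ, hi⟩, hK J' ⟨hJ', hi'⟩]

lemma isPartOf_empty_iff {π : Finset (Finset ι)} : IsPartOf (∅ : Finset ι) π ↔ π = ∅ := by
  constructor
  · intro h
    refine Finset.eq_empty_of_forall_notMem fun J hJ => ?_
    obtain ⟨i, hi⟩ := h.1 J hJ
    exact absurd (h.2.1 J hJ hi) (by simp)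
  · rintro rfl
    exact ⟨by simp, by simp, by simp⟩

lemma IsPartOf.erase {S : Finset ι} {π : Finset (Finset ι)} (h : IsPartOf S π)
    {B : Finset ι} (hB : B ∈ π) : IsPartOf (S \ B) (π.erase B) := by
  refine ⟨fun J hJ => h.1 J (mem_of_mem_erase hJ), ?_, ?_⟩
  · intro J hJ i hi
    have hJπ := Finset.mem_of_mem_erase hJ
    refine Finset.mem_sdiff.2 ⟨h.2.1 J hJπ hi, fun hiB => ?_⟩
    exact (Finset.ne_of_mem_erase hJ) (h.block_eq hJπ hB hi hiB)
  · intro i hi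
    obtain ⟨hiS, hiB⟩ := Finset.mem_sdiff.1 hi
    obtain ⟨J, ⟨hJπ, hiJ⟩, huniq⟩ := h.2.2 i hiS
    have hJB : J ≠ B := fun e => hiB (e ▸ hiJ)
    exact ⟨J, ⟨Finset.mem_erase.2 ⟨hJB, hJπ⟩, hiJ⟩,
      fun K ⟨hK, hiK⟩ => huniq K ⟨Finset.mem_of_mem_erase hK, hiK⟩⟩

lemma isPartOf_insert {S B : Finset ι} {π' : Finset (Finset ι)} (h : IsPartOf (S \ B) π')
    (hB : B.Nonempty) (hBS : B ⊆ S) :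
    IsPartOf S (insert B π') ∧ B ∉ π' := by
  have hBnot : B ∉ π' := by
    intro hmem
    obtain ⟨i, hi⟩ := hB
    exact (Finset.mem_sdiff.1 (h.2.1 B hmem hi)).2 hi
  refine ⟨⟨?_, ?_, ?_⟩, hBnot⟩
  · intro J hJ
    rcases Finset.mem_insert.1 hJ with rfl | hJ
    · exact hB
    · exact h.1 J hJ
  · intro J hJ
    rcases Finset.mem_insert.1 hJ with rfl | hJ
    · exact hBS
    · exact (h.2.1 J hJ).trans (Finset.sdiff_subset)
  · intro i hi
    by_cases hiB : i ∈ B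
    · refine ⟨B, ⟨Finset.mem_insert_self _ _, hiB⟩, ?_⟩
      rintro K ⟨hK, hiK⟩
      rcases Finset.mem_insert.1 hK with rfl | hK
      · rfl
      · exact absurd hiB (Finset.mem_sdiff.1 (h.2.1 K hK hiK)).2
    · obtain ⟨J, ⟨hJπ, hiJ⟩, huniq⟩ := h.2.2 i (Finset.mem_sdiff.2 ⟨hi, hiB⟩)
      refine ⟨J, ⟨Finset.mem_insert_of_mem hJπ, hiJ⟩, ?_⟩
      rintro K ⟨hK, hiK⟩
      rcases Finset.mem_insert.1 hK with rfl | hK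
      · exact absurd hiK hiB
      · exact huniq K ⟨hK, hiK⟩

/-- Summing over partitions of `S` containing a fixed block `B` equals summing over
partitions of `S \ B`. -/
lemma sum_with_block {S B : Finset ι} (hB : B.Nonempty) (hBS : B ⊆ S) (f : ℕ → ℤ) :
    ∑ π ∈ (partsOf S).filter (fun π => B ∈ π), f π.card
      = ∑ π' ∈ partsOf (S \ B), f (π'.card + 1) := by
  refine Finset.sum_nbij' (fun π => π.erase B) (fun π' => insert B π') ?_ ?_ ?_ ?_ ?_
  · intro π hπ
    obtain ⟨hπ, hBπ⟩ := Finset.mem_filter.1 hπ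
    exact mem_partsOf.2 ((mem_partsOf.1 hπ).erase hBπ)
  · intro π' hπ'
    obtain ⟨h1, h2⟩ := isPartOf_insert (mem_partsOf.1 hπ') hB hBS
    exact Finset.mem_filter.2 ⟨mem_partsOf.2 h1, Finset.mem_insert_self _ _⟩
  · intro π hπ
    exact Finset.insert_erase (Finset.mem_filter.1 hπ).2
  · intro π' hπ'
    exact Finset.erase_insert (isPartOf_insert (mem_partsOf.1 hπ') hB hBS).2
  · intro π hπ
    obtain ⟨hπ', hBπ⟩ := Finset.mem_filter.1 hπ
    have : π.card = (π.erase B).card + 1 := by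
      rw [Finset.card_erase_of_mem hBπ]
      have := Finset.card_pos.2 ⟨B, hBπ⟩
      omega
    rw [this]

noncomputable def Gp (S : Finset ι) : ℤ :=
  ∑ π ∈ partsOf S, (-1) ^ π.card * (Nat.factorial π.card : ℤ)

lemma Gp_empty : Gp (∅ : Finset ι) = 1 := by
  have : partsOf (∅ : Finset ι) = {∅} := by
    ext π; simp [mem_partsOf, isPartOf_empty_iff]
  simp [Gp, this]

lemma Gp_rec {S : Finset ι} (hS : S.Nonempty) :
    Gp S = -∑ B ∈ S.powerset.filter (fun B => B.Nonempty), Gp (S \ B) := by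
  have hstep : ∀ π ∈ partsOf S,
      (-1 : ℤ) ^ π.card * (Nat.factorial π.card : ℤ)
        = ∑ B ∈ π, (-1 : ℤ) ^ π.card * (Nat.factorial (π.card - 1) : ℤ) := by
    intro π hπ
    have hπne : π.Nonempty := by
      obtain ⟨i, hi⟩ := hS
      obtain ⟨J, ⟨hJ, _⟩, _⟩ := (mem_partsOf.1 hπ).2.2 i hi
      exact ⟨J, hJ⟩
    have hc : π.card = (π.card - 1) + 1 := by
      have := Finset.card_pos.2 hπne; omega
    rw [Finset.sum_const, nsmul_eq_mul]
    rw [hc, Nat.factorial_succ]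
    push_cast
    ring
  rw [Gp, Finset.sum_congr rfl hstep]
  have swap : ∑ π ∈ partsOf S, ∑ B ∈ π, (-1 : ℤ) ^ π.card * (Nat.factorial (π.card - 1) : ℤ)
      = ∑ B ∈ (Finset.univ : Finset (Finset ι)),
          ∑ π ∈ (partsOf S).filter (fun π => B ∈ π),
            (-1 : ℤ) ^ π.card * (Nat.factorial (π.card - 1) : ℤ) := by
    simp_rw [Finset.sum_filter]
    rw [Finset.sum_comm]
    refine Finset.sum_congr rfl fun π _ => ?_
    rw [← Finset.sum_filter]
    refine (Finset.sum_congr ?_ fun _ _ => rfl)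
    ext B; simp
  rw [swap]
  have restrict : ∑ B ∈ (Finset.univ : Finset (Finset ι)),
          ∑ π ∈ (partsOf S).filter (fun π => B ∈ π),
            (-1 : ℤ) ^ π.card * (Nat.factorial (π.card - 1) : ℤ)
      = ∑ B ∈ S.powerset.filter (fun B => B.Nonempty),
          ∑ π ∈ (partsOf S).filter (fun π => B ∈ π),
            (-1 : ℤ) ^ π.card * (Nat.factorial (π.card - 1) : ℤ) := by
    refine (Finset.sum_subset (Finset.subset_univ _) ?_).symm
    intro B _ hB
    have : (partsOf S).filter (fun π => B ∈ π) = ∅ := by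
      refine Finset.filter_eq_empty_iff.2 fun {π} hπ hBπ => ?_
      have h := mem_partsOf.1 hπ
      exact hB (Finset.mem_filter.2 ⟨Finset.mem_powerset.2 (h.2.1 B hBπ), h.1 B hBπ⟩)
    rw [this, Finset.sum_empty]
  rw [restrict, ← Finset.sum_neg_distrib]
  refine Finset.sum_congr rfl fun B hB => ?_
  obtain ⟨hBS, hBne⟩ := Finset.mem_filter.1 hB
  rw [sum_with_block hBne (Finset.mem_powerset.1 hBS)
    (fun n => (-1 : ℤ) ^ n * (Nat.factorial (n - 1) : ℤ))]
  rw [Gp, ← Finset.sum_neg_distrib]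
  refine Finset.sum_congr rfl fun π' _ => ?_
  simp [pow_succ]


lemma sum_Gp_powerset {S : Finset ι} (hS : S.Nonempty) :
    ∑ T ∈ S.powerset, Gp T = 0 := by
  have hSmem : S ∈ S.powerset := Finset.mem_powerset_self S
  rw [← Finset.add_sum_erase _ _ hSmem]
  have : ∑ T ∈ S.powerset.erase S, Gp T
      = ∑ B ∈ S.powerset.filter (fun B => B.Nonempty), Gp (S \ B) := by
    refine Finset.sum_nbij' (fun T => S \ T) (fun B => S \ B) ?_ ?_ ?_ ?_ ?_
    · intro T hT
      obtain ⟨hTne, hTS⟩ := Finset.mem_erase.1 hT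
      have hTS' := Finset.mem_powerset.1 hTS
      refine Finset.mem_filter.2 ⟨Finset.mem_powerset.2 Finset.sdiff_subset, ?_⟩
      rw [Finset.sdiff_nonempty]
      intro hsub
      exact hTne (Finset.Subset.antisymm hTS' hsub)
    · intro B hB
      obtain ⟨hBS, hBne⟩ := Finset.mem_filter.1 hB
      have hBS' := Finset.mem_powerset.1 hBS
      refine Finset.mem_erase.2 ⟨?_, Finset.mem_powerset.2 Finset.sdiff_subset⟩
      intro h
      obtain ⟨i, hi⟩ := hBne
      have : i ∈ S \ B := by rw [h]; exact hBS' hi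
      exact (Finset.mem_sdiff.1 this).2 hi
    · intro T hT
      exact Finset.sdiff_sdiff_eq_self (Finset.mem_powerset.1 (Finset.mem_erase.1 hT).2)
    · intro B hB
      exact Finset.sdiff_sdiff_eq_self (Finset.mem_powerset.1 (Finset.mem_filter.1 hB).1)
    · intro T hT
      rw [Finset.sdiff_sdiff_eq_self (Finset.mem_powerset.1 (Finset.mem_erase.1 hT).2)]
  rw [this, Gp_rec hS]
  ring

/-- The key identity: the sum of the Möbius values over all partitions of `S`. -/
lemma sum_parts_weight {S : Finset ι} (hS : S.Nonempty) :
    ∑ π ∈ partsOf S, (-1 : ℤ) ^ (π.card - 1) * (Nat.factorial (π.card - 1) : ℤ)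
      = if S.card = 1 then 1 else 0 := by
  obtain ⟨x, hx⟩ := hS
  set blk : Finset (Finset ι) → Finset ι := fun π => π.sup (fun J => if x ∈ J then J else ∅)
    with hblk
  have hblk_eq : ∀ π ∈ partsOf S, ∀ B, B ∈ π → x ∈ B → blk π = B := by
    intro π hπ B hBπ hxB
    have h := mem_partsOf.1 hπ
    refine le_antisymm (Finset.sup_le fun J hJ => ?_) ?_
    · by_cases hxJ : x ∈ J
      · simp only [if_pos hxJ]
        exact le_of_eq (h.block_eq hJ hBπ hxJ hxB)
      · simp [hxJ]
    · have := Finset.le_sup (f := fun J => if x ∈ J then J else ∅) hBπ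
      simpa [hxB] using this
  have maps : ∀ π ∈ partsOf S, blk π ∈ S.powerset.filter (fun B => x ∈ B) := by
    intro π hπ
    have h := mem_partsOf.1 hπ
    obtain ⟨B, ⟨hBπ, hxB⟩, _⟩ := h.2.2 x hx
    rw [hblk_eq π hπ B hBπ hxB]
    exact Finset.mem_filter.2 ⟨Finset.mem_powerset.2 (h.2.1 B hBπ), hxB⟩
  rw [← Finset.sum_fiberwise_of_maps_to maps
    (fun π => (-1 : ℤ) ^ (π.card - 1) * (Nat.factorial (π.card - 1) : ℤ))]
  have inner : ∀ B ∈ S.powerset.filter (fun B => x ∈ B),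
      ∑ π ∈ (partsOf S).filter (fun π => blk π = B),
        (-1 : ℤ) ^ (π.card - 1) * (Nat.factorial (π.card - 1) : ℤ) = Gp (S \ B) := by
    intro B hB
    obtain ⟨hBS, hxB⟩ := Finset.mem_filter.1 hB
    have hfe : (partsOf S).filter (fun π => blk π = B)
        = (partsOf S).filter (fun π => B ∈ π) := by
      ext π
      simp only [Finset.mem_filter]
      constructor
      · rintro ⟨hπ, rfl⟩
        obtain ⟨B', ⟨hB'π, hxB'⟩, _⟩ := (mem_partsOf.1 hπ).2.2 x hx
        rw [hblk_eq π hπ B' hB'π hxB']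
        exact ⟨hπ, hB'π⟩
      · rintro ⟨hπ, hBπ⟩
        exact ⟨hπ, hblk_eq π hπ B hBπ hxB⟩
    rw [hfe, sum_with_block ⟨x, hxB⟩ (Finset.mem_powerset.1 hBS)
      (fun n => (-1 : ℤ) ^ (n - 1) * (Nat.factorial (n - 1) : ℤ))]
    simp [Gp]
  rw [Finset.sum_congr rfl inner]
  have bij : ∑ B ∈ S.powerset.filter (fun B => x ∈ B), Gp (S \ B)
      = ∑ T ∈ (S.erase x).powerset, Gp T := by
    refine Finset.sum_nbij' (fun B => S \ B) (fun T => S \ T) ?_ ?_ ?_ ?_ ?_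
    · intro B hB
      obtain ⟨hBS, hxB⟩ := Finset.mem_filter.1 hB
      refine Finset.mem_powerset.2 fun i hi => ?_
      obtain ⟨hiS, hiB⟩ := Finset.mem_sdiff.1 hi
      exact Finset.mem_erase.2 ⟨fun h => hiB (h ▸ hxB), hiS⟩
    · intro T hT
      have hTS : T ⊆ S := (Finset.mem_powerset.1 hT).trans (Finset.erase_subset _ _)
      refine Finset.mem_filter.2 ⟨Finset.mem_powerset.2 Finset.sdiff_subset,
        Finset.mem_sdiff.2 ⟨hx, fun hxT => ?_⟩⟩
      exact absurd (Finset.mem_powerset.1 hT hxT) (by simp)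
    · intro B hB
      exact Finset.sdiff_sdiff_eq_self (Finset.mem_powerset.1 (Finset.mem_filter.1 hB).1)
    · intro T hT
      exact Finset.sdiff_sdiff_eq_self
        ((Finset.mem_powerset.1 hT).trans (Finset.erase_subset _ _))
    · intro B hB; rfl
  rw [bij]
  by_cases h1 : S.erase x = ∅
  · have hScard : S.card = 1 := by
      have := Finset.card_erase_of_mem hx
      have hpos := Finset.card_pos.2 ⟨x, hx⟩
      rw [h1] at this
      simp at this
      omega
    rw [h1, if_pos hScard]
    simp [Gp_empty]
  · have hne : (S.erase x).Nonempty := Finset.nonempty_of_ne_empty h1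
    rw [sum_Gp_powerset hne, if_neg ?_]
    have := Finset.card_erase_of_mem hx
    have := Finset.card_pos.2 hne
    omega

end Generic

section PartitionLattice
open scoped Classical
variable {m : ℕ}

lemma IsSetPartition.block_eq {α : Finset (Finset (Fin m))} (h : IsSetPartition α)
    {J J' : Finset (Fin m)} {i : Fin m} (hJ : J ∈ α) (hJ' : J' ∈ α) (hi : i ∈ J)
    (hi' : i ∈ J') : J = J' := by
  obtain ⟨K, _, hK⟩ := h.2 i
  rw [hK J ⟨hJ, hi⟩, hK J' ⟨hJ', hi'⟩]

lemma isSetPartition_iff_isPartOf {α : Finset (Finset (Fin m))} :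
    IsSetPartition α ↔ IsPartOf (Finset.univ : Finset (Fin m)) α := by
  constructor
  · intro h
    exact ⟨h.1, fun J _ => Finset.subset_univ J, fun i _ => h.2 i⟩
  · intro h
    exact ⟨h.1, fun i => h.2.2 i (Finset.mem_univ i)⟩

lemma refines_refl (α : Finset (Finset (Fin m))) : Refines α α :=
  fun J hJ => ⟨J, hJ, le_refl J⟩

lemma refines_trans {α β γ : Finset (Finset (Fin m))} (h1 : Refines α β) (h2 : Refines β γ) :
    Refines α γ := by
  intro J hJ
  obtain ⟨J', hJ', hss⟩ := h1 J hJ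
  obtain ⟨J'', hJ'', hss'⟩ := h2 J' hJ'
  exact ⟨J'', hJ'', hss.trans hss'⟩

lemma refines_antisymm {α β : Finset (Finset (Fin m))} (hα : IsSetPartition α)
    (hβ : IsSetPartition β) (h1 : Refines α β) (h2 : Refines β α) : α = β := by
  have key : ∀ γ δ : Finset (Finset (Fin m)), IsSetPartition γ → Refines γ δ → Refines δ γ →
      γ ⊆ δ := by
    intro γ δ hγ hγδ hδγ J hJ
    obtain ⟨J', hJ', hss⟩ := hγδ J hJ
    obtain ⟨J'', hJ'', hss'⟩ := hδγ J' hJ'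
    obtain ⟨i, hi⟩ := hγ.1 J hJ
    have : J = J'' := hγ.block_eq hJ hJ'' hi (hss' (hss hi))
    have hJJ' : J = J' := Finset.Subset.antisymm hss (this ▸ hss')
    exact hJJ' ▸ hJ'
  exact Finset.Subset.antisymm (key α β hα h1 h2) (key β α hβ h2 h1)

lemma mem_partMeet {α β : Finset (Finset (Fin m))} {K : Finset (Fin m)} :
    K ∈ partMeet α β ↔ K ≠ ∅ ∧ ∃ A ∈ α, ∃ B ∈ β, A ∩ B = K := by
  simp only [partMeet, Finset.mem_erase, Finset.mem_image, Finset.mem_product, Prod.exists]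
  constructor
  · rintro ⟨hne, a, b, ⟨ha, hb⟩, rfl⟩
    exact ⟨hne, a, ha, b, hb, rfl⟩
  · rintro ⟨hne, a, ha, b, hb, rfl⟩
    exact ⟨hne, a, b, ⟨ha, hb⟩, rfl⟩

lemma partMeet_isSetPartition {α β : Finset (Finset (Fin m))} (hα : IsSetPartition α)
    (hβ : IsSetPartition β) : IsSetPartition (partMeet α β) := by
  constructor
  · intro K hK
    exact Finset.nonempty_iff_ne_empty.2 (mem_partMeet.1 hK).1
  · intro i
    obtain ⟨A, ⟨hA, hiA⟩, huA⟩ := hα.2 i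
    obtain ⟨B, ⟨hB, hiB⟩, huB⟩ := hβ.2 i
    have hiAB : i ∈ A ∩ B := Finset.mem_inter.2 ⟨hiA, hiB⟩
    refine ⟨A ∩ B, ⟨mem_partMeet.2 ⟨fun h => by simp [h] at hiAB, A, hA, B, hB, rfl⟩, hiAB⟩, ?_⟩
    rintro K ⟨hK, hiK⟩
    obtain ⟨-, A', hA', B', hB', rfl⟩ := mem_partMeet.1 hK
    obtain ⟨hiA', hiB'⟩ := Finset.mem_inter.1 hiK
    rw [huA A' ⟨hA', hiA'⟩, huB B' ⟨hB', hiB'⟩]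

lemma partMeet_refines_left {α β : Finset (Finset (Fin m))} : Refines (partMeet α β) α := by
  intro K hK
  obtain ⟨-, A, hA, B, hB, rfl⟩ := mem_partMeet.1 hK
  exact ⟨A, hA, Finset.inter_subset_left⟩

lemma partMeet_refines_right {α β : Finset (Finset (Fin m))} : Refines (partMeet α β) β := by
  intro K hK
  obtain ⟨-, A, hA, B, hB, rfl⟩ := mem_partMeet.1 hK
  exact ⟨B, hB, Finset.inter_subset_right⟩

lemma refines_partMeet {d α β : Finset (Finset (Fin m))} (hd : IsSetPartition d)
    (h1 : Refines d α) (h2 : Refines d β) : Refines d (partMeet α β) := by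
  intro D hD
  obtain ⟨A, hA, hDA⟩ := h1 D hD
  obtain ⟨B, hB, hDB⟩ := h2 D hD
  obtain ⟨i, hi⟩ := hd.1 D hD
  have hsub : D ⊆ A ∩ B := fun j hj => Finset.mem_inter.2 ⟨hDA hj, hDB hj⟩
  refine ⟨A ∩ B, mem_partMeet.2 ⟨fun h => by simpa [h] using hsub hi, A, hA, B, hB, rfl⟩, hsub⟩

lemma ne_top_of_refines {d β : Finset (Finset (Fin m))} (hβ : IsSetPartition β)
    (hdβ : Refines d β) (hβtop : β ≠ ({Finset.univ} : Finset (Finset (Fin m))))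
    (hd : d = ({Finset.univ} : Finset (Finset (Fin m)))) : False := by
  subst hd
  obtain ⟨J', hJ', hss⟩ := hdβ Finset.univ (Finset.mem_singleton_self _)
  have hJu : J' = Finset.univ := Finset.univ_subset_iff.1 hss
  subst hJu
  refine hβtop ?_
  ext K
  simp only [Finset.mem_singleton]
  constructor
  · intro hK
    obtain ⟨i, hi⟩ := hβ.1 K hK
    exact hβ.block_eq hK hJ' hi (Finset.mem_univ i)
  · rintro rfl; exact hJ'

lemma exists_block_sub {δ α : Finset (Finset (Fin m))} (hδ : IsSetPartition δ)
    (hα : IsSetPartition α) (hr : Refines δ α) {A : Finset (Fin m)} (hA : A ∈ α)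
    {i : Fin m} (hi : i ∈ A) : ∃ J ∈ δ, i ∈ J ∧ J ⊆ A := by
  obtain ⟨J, ⟨hJ, hiJ⟩, -⟩ := hδ.2 i
  obtain ⟨A', hA', hJA'⟩ := hr J hJ
  have hAA : A' = A := hα.block_eq hA' hA (hJA' hiJ) hi
  exact ⟨J, hJ, hiJ, hAA ▸ hJA'⟩

lemma v_isPartOf {δ α : Finset (Finset (Fin m))} (hδ : IsSetPartition δ)
    (hα : IsSetPartition α) (hr : Refines δ α) :
    IsPartOf δ (α.image (fun A => δ.filter (fun J => J ⊆ A))) := by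
  refine ⟨?_, ?_, ?_⟩
  · intro P hP
    obtain ⟨A, hA, rfl⟩ := Finset.mem_image.1 hP
    obtain ⟨i, hi⟩ := hα.1 A hA
    obtain ⟨J, hJ, hiJ, hJA⟩ := exists_block_sub hδ hα hr hA hi
    exact ⟨J, Finset.mem_filter.2 ⟨hJ, hJA⟩⟩
  · intro P hP
    obtain ⟨A, hA, rfl⟩ := Finset.mem_image.1 hP
    exact Finset.filter_subset _ _
  · intro J hJ
    obtain ⟨i, hi⟩ := hδ.1 J hJ
    obtain ⟨A, ⟨hA, hiA⟩, huA⟩ := hα.2 i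
    obtain ⟨A', hA', hJA'⟩ := hr J hJ
    have hAA : A' = A := huA A' ⟨hA', hJA' hi⟩
    subst hAA
    refine ⟨δ.filter (fun K => K ⊆ A'), ⟨Finset.mem_image_of_mem _ hA',
      Finset.mem_filter.2 ⟨hJ, hJA'⟩⟩, ?_⟩
    rintro P ⟨hP, hJP⟩
    obtain ⟨A'', hA'', rfl⟩ := Finset.mem_image.1 hP
    have hJA'' : J ⊆ A'' := (Finset.mem_filter.1 hJP).2
    rw [huA A'' ⟨hA'', hJA'' hi⟩]

lemma sup_filter_eq {δ α : Finset (Finset (Fin m))} (hδ : IsSetPartition δ)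
    (hα : IsSetPartition α) (hr : Refines δ α) {A : Finset (Fin m)} (hA : A ∈ α) :
    (δ.filter (fun J => J ⊆ A)).sup id = A := by
  apply Finset.Subset.antisymm
  · intro i hi
    obtain ⟨J, hJ, hiJ⟩ := Finset.mem_sup.1 hi
    exact (Finset.mem_filter.1 hJ).2 hiJ
  · intro i hi
    obtain ⟨J, hJ, hiJ, hJA⟩ := exists_block_sub hδ hα hr hA hi
    exact Finset.mem_sup.2 ⟨J, Finset.mem_filter.2 ⟨hJ, hJA⟩, hiJ⟩

lemma u_isSetPartition {δ : Finset (Finset (Fin m))} (hδ : IsSetPartition δ)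
    {pp : Finset (Finset (Finset (Fin m)))} (hπ : IsPartOf δ pp) :
    IsSetPartition (pp.image (fun P => P.sup id)) ∧
      Refines δ (pp.image (fun P => P.sup id)) := by
  constructor
  · constructor
    · intro K hK
      obtain ⟨P, hP, rfl⟩ := Finset.mem_image.1 hK
      obtain ⟨J, hJP⟩ := hπ.1 P hP
      obtain ⟨i, hi⟩ := hδ.1 J (hπ.2.1 P hP hJP)
      exact ⟨i, Finset.mem_sup.2 ⟨J, hJP, hi⟩⟩
    · intro i
      obtain ⟨J, ⟨hJ, hiJ⟩, huJ⟩ := hδ.2 i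
      obtain ⟨P, ⟨hP, hJP⟩, huP⟩ := hπ.2.2 J hJ
      refine ⟨P.sup id, ⟨Finset.mem_image_of_mem _ hP, Finset.mem_sup.2 ⟨J, hJP, hiJ⟩⟩, ?_⟩
      rintro K ⟨hK, hiK⟩
      obtain ⟨Q, hQ, rfl⟩ := Finset.mem_image.1 hK
      obtain ⟨J', hJ'Q, hiJ'⟩ := Finset.mem_sup.1 hiK
      have hJJ : J' = J := huJ J' ⟨hπ.2.1 Q hQ hJ'Q, hiJ'⟩
      subst hJJ
      rw [huP Q ⟨hQ, hJ'Q⟩]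
  · intro J hJ
    obtain ⟨P, ⟨hP, hJP⟩, -⟩ := hπ.2.2 J hJ
    exact ⟨P.sup id, Finset.mem_image_of_mem _ hP, Finset.le_sup (f := id) hJP⟩

lemma sum_coarser (hm : 0 < m) {δ : Finset (Finset (Fin m))} (hδ : IsSetPartition δ)
    (hδtop : δ ≠ ({Finset.univ} : Finset (Finset (Fin m)))) :
    ∑ α ∈ Finset.univ.filter
        (fun α : Finset (Finset (Fin m)) => IsSetPartition α ∧ Refines δ α),
      ((-1 : ℤ) ^ (α.card - 1) * (Nat.factorial (α.card - 1) : ℤ)) = 0 := by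
  have hδne : δ.Nonempty := by
    obtain ⟨J, ⟨hJ, -⟩, -⟩ := hδ.2 ⟨0, hm⟩
    exact ⟨J, hJ⟩
  have hδcard : δ.card ≠ 1 := by
    intro h
    obtain ⟨J, hJ⟩ := Finset.card_eq_one.1 h
    refine hδtop ?_
    rw [hJ]
    congr 1
    refine Finset.eq_univ_iff_forall.2 fun i => ?_
    obtain ⟨K, ⟨hK, hiK⟩, -⟩ := hδ.2 i
    rw [hJ, Finset.mem_singleton] at hK
    exact hK ▸ hiK
  have main : ∑ α ∈ Finset.univ.filter
        (fun α : Finset (Finset (Fin m)) => IsSetPartition α ∧ Refines δ α),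
      ((-1 : ℤ) ^ (α.card - 1) * (Nat.factorial (α.card - 1) : ℤ))
      = ∑ pp ∈ partsOf δ, ((-1 : ℤ) ^ (pp.card - 1) * (Nat.factorial (pp.card - 1) : ℤ)) := by
    refine Finset.sum_nbij' (fun α => α.image (fun A => δ.filter (fun J => J ⊆ A)))
      (fun pp => pp.image (fun P => P.sup id)) ?_ ?_ ?_ ?_ ?_
    · intro α hα
      obtain ⟨-, hα, hr⟩ := Finset.mem_filter.1 hα
      exact mem_partsOf.2 (v_isPartOf hδ hα hr)
    · intro pp hπ
      have h := u_isSetPartition hδ (mem_partsOf.1 hπ)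
      exact Finset.mem_filter.2 ⟨Finset.mem_univ _, h.1, h.2⟩
    · intro α hα
      obtain ⟨-, hα, hr⟩ := Finset.mem_filter.1 hα
      rw [Finset.image_image]
      calc α.image _ = α.image id := Finset.image_congr fun A hA =>
            sup_filter_eq hδ hα hr hA
        _ = α := Finset.image_id
    · intro pp hπ
      have hπ' := mem_partsOf.1 hπ
      rw [Finset.image_image]
      have : ∀ P ∈ pp, δ.filter (fun J => J ⊆ P.sup id) = P := by
        intro P hP
        ext J
        simp only [Finset.mem_filter]
        constructor
        · rintro ⟨hJ, hJsup⟩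
          obtain ⟨i, hi⟩ := hδ.1 J hJ
          obtain ⟨J', hJ'P, hiJ'⟩ := Finset.mem_sup.1 (hJsup hi)
          have : J' = J := hδ.block_eq (hπ'.2.1 P hP hJ'P) hJ hiJ' hi
          exact this ▸ hJ'P
        · intro hJP
          exact ⟨hπ'.2.1 P hP hJP, Finset.le_sup (f := id) hJP⟩
      calc pp.image _ = pp.image id := Finset.image_congr fun P hP => this P hP
        _ = pp := Finset.image_id
    · intro α hαmem
      obtain ⟨-, hα, hr⟩ := Finset.mem_filter.1 hαmem
      have hcard : (α.image (fun A => δ.filter (fun J => J ⊆ A))).card = α.card := by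
        refine le_antisymm Finset.card_image_le ?_
        have himg : (α.image (fun A => δ.filter (fun J => J ⊆ A))).image
            (fun P => P.sup id) = α := by
          rw [Finset.image_image]
          calc α.image _ = α.image id := Finset.image_congr fun A hA =>
                sup_filter_eq hδ hα hr hA
            _ = α := Finset.image_id
        conv_lhs => rw [← himg]
        exact Finset.card_image_le
      rw [hcard]
  rw [main, sum_parts_weight hδne, if_neg hδcard]

lemma weisner_aux (hm : 0 < m) (β : Finset (Finset (Fin m)))
    (hβ : IsSetPartition β) (hβtop : β ≠ ({Finset.univ} : Finset (Finset (Fin m)))) :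
    ∀ n : ℕ, ∀ d : Finset (Finset (Fin m)), IsSetPartition d → Refines d β →
      (Finset.univ.filter (fun e : Finset (Finset (Fin m)) =>
        (IsSetPartition e ∧ Refines d e ∧ Refines e β) ∧ e ≠ d)).card ≤ n →
      ∑ α ∈ Finset.univ.filter
          (fun α : Finset (Finset (Fin m)) => IsSetPartition α ∧ partMeet α β = d),
        ((-1 : ℤ) ^ (α.card - 1) * (Nat.factorial (α.card - 1) : ℤ)) = 0 := by
  intro n
  induction n using Nat.strong_induction_on with
  | _ n ih =>
  intro d hd hdβ hcard
  set D := Finset.univ.filter (fun e : Finset (Finset (Fin m)) =>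
      IsSetPartition e ∧ Refines d e ∧ Refines e β) with hD
  have hdD : d ∈ D := Finset.mem_filter.2 ⟨Finset.mem_univ _, hd, refines_refl d, hdβ⟩
  have maps : ∀ α ∈ Finset.univ.filter
      (fun α : Finset (Finset (Fin m)) => IsSetPartition α ∧ Refines d α),
      partMeet α β ∈ D := by
    intro α hα
    obtain ⟨-, hα, hr⟩ := Finset.mem_filter.1 hα
    exact Finset.mem_filter.2 ⟨Finset.mem_univ _, partMeet_isSetPartition hα hβ,
      refines_partMeet hd hr hdβ, partMeet_refines_right⟩
  have key : ∑ e ∈ D, ∑ α ∈ Finset.univ.filter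
      (fun α : Finset (Finset (Fin m)) => IsSetPartition α ∧ partMeet α β = e),
      ((-1 : ℤ) ^ (α.card - 1) * (Nat.factorial (α.card - 1) : ℤ)) = 0 := by
    have fib := Finset.sum_fiberwise_of_maps_to maps
      (fun α => ((-1 : ℤ) ^ (α.card - 1) * (Nat.factorial (α.card - 1) : ℤ)))
    rw [← sum_coarser hm hd (fun h => ne_top_of_refines hβ hdβ hβtop h), ← fib]
    refine Finset.sum_congr rfl fun e he => ?_
    refine Finset.sum_congr ?_ fun _ _ => rfl
    obtain ⟨-, he', hde, heβ⟩ := Finset.mem_filter.1 he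
    ext α
    simp only [Finset.mem_filter, Finset.mem_univ, true_and]
    constructor
    · rintro ⟨hα, hmeet⟩
      refine ⟨⟨hα, refines_trans hde ?_⟩, hmeet⟩
      rw [← hmeet]
      exact partMeet_refines_left
    · rintro ⟨⟨hα, -⟩, hmeet⟩
      exact ⟨hα, hmeet⟩
  rw [← Finset.add_sum_erase _ _ hdD] at key
  have herase : D.erase d = Finset.univ.filter (fun e : Finset (Finset (Fin m)) =>
      (IsSetPartition e ∧ Refines d e ∧ Refines e β) ∧ e ≠ d) := by
    ext e
    simp only [hD, Finset.mem_erase, Finset.mem_filter, Finset.mem_univ, true_and]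
    tauto
  have hzero : ∀ e ∈ D.erase d, ∑ α ∈ Finset.univ.filter
      (fun α : Finset (Finset (Fin m)) => IsSetPartition α ∧ partMeet α β = e),
      ((-1 : ℤ) ^ (α.card - 1) * (Nat.factorial (α.card - 1) : ℤ)) = 0 := by
    intro e he
    rw [herase] at he
    obtain ⟨-, ⟨hep, hde, heβ⟩, hned⟩ := Finset.mem_filter.1 he
    have hsub : Finset.univ.filter (fun x : Finset (Finset (Fin m)) =>
        (IsSetPartition x ∧ Refines e x ∧ Refines x β) ∧ x ≠ e)
        ⊆ (Finset.univ.filter (fun x : Finset (Finset (Fin m)) =>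
        (IsSetPartition x ∧ Refines d x ∧ Refines x β) ∧ x ≠ d)).erase e := by
      intro x hx
      obtain ⟨-, ⟨hxp, hex, hxβ⟩, hxe⟩ := Finset.mem_filter.1 hx
      refine Finset.mem_erase.2 ⟨hxe, Finset.mem_filter.2
        ⟨Finset.mem_univ _, ⟨hxp, refines_trans hde hex, hxβ⟩, ?_⟩⟩
      intro hxd
      subst hxd
      exact hned (refines_antisymm hep hd hex hde)
    have heD : e ∈ Finset.univ.filter (fun x : Finset (Finset (Fin m)) =>
        (IsSetPartition x ∧ Refines d x ∧ Refines x β) ∧ x ≠ d) := he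
    have hlt : (Finset.univ.filter (fun x : Finset (Finset (Fin m)) =>
        (IsSetPartition x ∧ Refines e x ∧ Refines x β) ∧ x ≠ e)).card < n := by
      have h1 := Finset.card_le_card hsub
      have h2 := Finset.card_erase_lt_of_mem heD
      omega
    exact ih _ hlt e hep heβ le_rfl
  rw [Finset.sum_eq_zero hzero, add_zero] at key
  exact key

end PartitionLattice

open Classical in
/-- Weisner's theorem for the partition lattice: if `γ ≤ β < {L}`, then
`∑_{α : α ∧ β = γ} (-1)^{|α|-1}(|α|-1)! = 0`. -/
theorem weisner_partition {m : ℕ} (hm : 0 < m)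
    (β γ : Finset (Finset (Fin m)))
    (hβ : IsSetPartition β) (hβtop : β ≠ {Finset.univ})
    (hγ : IsSetPartition γ) (hγβ : Refines γ β) :
    ∑ α ∈ Finset.univ.filter
        (fun α : Finset (Finset (Fin m)) => IsSetPartition α ∧ partMeet α β = γ),
      ((-1 : ℤ) ^ (α.card - 1) * (Nat.factorial (α.card - 1) : ℤ)) = 0 := by
  exact weisner_aux hm β hβ hβtop _ γ hγ hγβ le_rfl
end

section
/- The function f(z) = (3/(8π))·(sin(z/4)/(z/4))^4 is a probability density function on ℝ, i.e., it is nonnegative and integrates to 1. -/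
open Real MeasureTheory

section Aux
open Complex FourierTransform Filter intervalIntegral Set Function

/-- Triangle function. -/
noncomputable def triFn (x : ℝ) : ℂ := ((max 0 (1 - |x|) : ℝ) : ℂ)

/-- Squared sinc. -/
noncomputable def sinc2 (ξ : ℝ) : ℂ :=
  if ξ = 0 then 1 else ((Real.sin (π * ξ) / (π * ξ) : ℝ) : ℂ) ^ 2

/-- Real quartic sinc. -/
noncomputable def sinc4 (ξ : ℝ) : ℝ :=
  if ξ = 0 then 1 else (Real.sin (π * ξ) / (π * ξ)) ^ 4

lemma triFn_cont : Continuous triFn :=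
  Complex.continuous_ofReal.comp (continuous_const.max (continuous_const.sub continuous_abs))

lemma triFn_supp : Function.support triFn ⊆ Set.Icc (-1) 1 := by
  intro x hx
  simp only [Function.mem_support, triFn, ne_eq, Complex.ofReal_eq_zero] at hx
  rcases le_or_gt (|x|) 1 with h | h
  · exact abs_le.1 h
  · exact absurd (max_eq_left (by linarith)) hx

lemma triFn_integrable : Integrable triFn := by
  apply triFn_cont.integrable_of_hasCompactSupport
  exact HasCompactSupport.of_support_subset_isCompact isCompact_Icc triFn_supp

lemma triFn_neg (x : ℝ) : triFn (-x) = triFn x := by simp [triFn]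

lemma lin_exp (a b c : ℂ) (ha : a ≠ 0) (t₀ t₁ : ℝ) :
    ∫ x in t₀..t₁, (b + c * (x:ℂ)) * Complex.exp (a * (x:ℂ)) =
      ((b + c * t₁) / a - c / a ^ 2) * Complex.exp (a * t₁)
        - ((b + c * t₀) / a - c / a ^ 2) * Complex.exp (a * t₀) := by
  apply intervalIntegral.integral_eq_sub_of_hasDerivAt
  · intro x _
    have hE : HasDerivAt (fun x : ℝ => Complex.exp (a * (x:ℂ)))
        (Complex.exp (a * (x:ℂ)) * a) x := by
      simpa using (((hasDerivAt_id ((x:ℝ):ℂ)).const_mul a).cexp).comp_ofReal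
    have hC : HasDerivAt (fun x : ℝ => (b + c * (x:ℂ)) / a - c / a ^ 2) (c / a) x := by
      have h1 : HasDerivAt (fun z : ℂ => (b + c * z) / a - c / a ^ 2) (c / a) ((x:ℝ):ℂ) := by
        simpa using ((((hasDerivAt_id ((x:ℝ):ℂ)).const_mul c).const_add b).div_const a).sub_const (c / a ^ 2)
      exact h1.comp_ofReal
    have : HasDerivAt (fun x : ℝ => ((b + c * (x:ℂ)) / a - c / a ^ 2) * Complex.exp (a * (x:ℂ))) _ x := hC.mul hE
    refine this.congr_deriv ?_
    field_simp
    ring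
  · apply Continuous.intervalIntegrable
    fun_prop

lemma sum_eq (a E e : ℂ) :
    (0:ℂ) + (((1 : ℂ) / a - 1 / a ^ 2 + e / a ^ 2) + (E / a ^ 2 - ((1:ℂ) / a + 1 / a ^ 2))) =
    (E + e - 2) / a ^ 2 := by
  ring

lemma fourier_triFn (ξ : ℝ) : 𝓕 triFn ξ = sinc2 ξ := by
  rcases eq_or_ne ξ 0 with rfl | hξ
  · rw [Real.fourier_real_eq]
    simp only [mul_zero, neg_zero, AddChar.map_zero_eq_one, one_smul, sinc2, if_pos rfl]
    rw [show (fun v : ℝ => triFn v) = triFn from rfl]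
    have h0 : ∫ v : ℝ, triFn v = ∫ v in (-2:ℝ)..1, triFn v :=
      (intervalIntegral.integral_eq_integral_of_support_subset
        (triFn_supp.trans (fun x hx => ⟨by have := hx.1; linarith, hx.2⟩))).symm
    have hii : ∀ t₀ t₁ : ℝ, IntervalIntegrable triFn volume t₀ t₁ :=
      fun t₀ t₁ => triFn_cont.intervalIntegrable t₀ t₁
    rw [h0, ← intervalIntegral.integral_add_adjacent_intervals (hii (-2) (-1))
        ((hii (-1) 0).trans (hii 0 1)),
      ← intervalIntegral.integral_add_adjacent_intervals (hii (-1) 0) (hii 0 1)]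
    have q1 : ∫ v in (-2:ℝ)..(-1), triFn v = 0 := by
      rw [intervalIntegral.integral_congr (g := fun _ => (0:ℂ))]
      · simp
      · intro x hx
        rw [Set.uIcc_of_le (by norm_num)] at hx
        simp only [triFn, Complex.ofReal_eq_zero]
        rw [max_eq_left]
        have : |x| ≥ 1 := by
          rw [_root_.abs_of_nonpos (by linarith [hx.2])]
          linarith [hx.2]
        linarith
    have q2 : ∫ v in (-1:ℝ)..0, triFn v = ((1/2 : ℝ) : ℂ) := by
      rw [intervalIntegral.integral_congr (g := fun x : ℝ => (((1 + x : ℝ)) : ℂ))]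
      · rw [intervalIntegral.integral_ofReal]
        norm_num
        have hg : IntervalIntegrable (fun x : ℝ => x) volume (-1) 0 :=
          continuous_id.intervalIntegrable _ _
        rw [intervalIntegral.integral_add intervalIntegrable_const hg]
        simp [integral_id]
        norm_num
      · intro x hx
        rw [Set.uIcc_of_le (by norm_num)] at hx
        simp only [triFn]
        congr 1
        rw [_root_.abs_of_nonpos hx.2, max_eq_right (by linarith [hx.1] : (0:ℝ) ≤ 1 - -x)]
        ring
    have q3 : ∫ v in (0:ℝ)..1, triFn v = ((1/2 : ℝ) : ℂ) := by
      rw [intervalIntegral.integral_congr (g := fun x : ℝ => (((1 - x : ℝ)) : ℂ))]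
      · rw [intervalIntegral.integral_ofReal]
        norm_num
        have hg : IntervalIntegrable (fun x : ℝ => x) volume 0 1 :=
          continuous_id.intervalIntegrable _ _
        rw [intervalIntegral.integral_sub intervalIntegrable_const hg]
        simp [integral_id]
        norm_num
      · intro x hx
        rw [Set.uIcc_of_le (by norm_num)] at hx
        simp only [triFn]
        congr 1
        rw [_root_.abs_of_nonneg hx.1, max_eq_right (by linarith [hx.2] : (0:ℝ) ≤ 1 - x)]
    rw [q1, q2, q3]
    norm_num
  · obtain ⟨a, ha_def⟩ : ∃ a : ℂ, a = ((-2 * π * ξ : ℝ) : ℂ) * Complex.I := ⟨_, rfl⟩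
    have hπξ : (π * ξ : ℝ) ≠ 0 := mul_ne_zero Real.pi_ne_zero hξ
    have ha : a ≠ 0 := by
      simp [ha_def, Complex.ext_iff, Real.pi_ne_zero, hξ]
    have key : 𝓕 triFn ξ = ∫ v in (-2:ℝ)..1, Complex.exp (a * v) * triFn v := by
      rw [Real.fourier_real_eq_integral_exp_smul]
      have hsupp : Function.support (fun v : ℝ =>
          Complex.exp (((-2*π*v*ξ : ℝ):ℂ) * Complex.I) • triFn v) ⊆ Set.Ioc (-2:ℝ) 1 := by
        intro v hv
        have h1 : triFn v ≠ 0 := by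
          intro h
          apply hv
          simp [h]
        have hv2 := triFn_supp h1
        exact ⟨by have := hv2.1; linarith, hv2.2⟩
      rw [← intervalIntegral.integral_eq_integral_of_support_subset hsupp]
      apply intervalIntegral.integral_congr
      intro x _
      show Complex.exp _ • triFn x = Complex.exp (a * x) * triFn x
      rw [ha_def, smul_eq_mul]
      congr 2
      push_cast
      ring
    have hii : ∀ (t₀ t₁ : ℝ), IntervalIntegrable (fun v : ℝ => Complex.exp (a * v) * triFn v)
        volume t₀ t₁ := by
      intro t₀ t₁
      apply Continuous.intervalIntegrable
      exact (Continuous.cexp (by fun_prop)).mul triFn_cont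
    have split : ∫ v in (-2:ℝ)..1, Complex.exp (a * v) * triFn v =
        (∫ v in (-2:ℝ)..(-1), Complex.exp (a * v) * triFn v)
        + ((∫ v in (-1:ℝ)..0, Complex.exp (a * v) * triFn v)
        + (∫ v in (0:ℝ)..1, Complex.exp (a * v) * triFn v)) := by
      rw [intervalIntegral.integral_add_adjacent_intervals (hii (-1) 0) (hii 0 1),
        intervalIntegral.integral_add_adjacent_intervals (hii (-2) (-1)) ((hii (-1) 0).trans (hii 0 1))]
    have p1 : ∫ v in (-2:ℝ)..(-1), Complex.exp (a * v) * triFn v = 0 := by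
      rw [intervalIntegral.integral_congr (g := fun _ => (0:ℂ))]
      · simp
      · intro x hx
        rw [Set.uIcc_of_le (by norm_num)] at hx
        have : triFn x = 0 := by
          simp only [triFn, Complex.ofReal_eq_zero]
          rw [max_eq_left]
          have : |x| ≥ 1 := by
            rw [_root_.abs_of_nonpos (by linarith [hx.2])]
            linarith [hx.2]
          linarith
        simp [this]
    have p2 : ∫ v in (-1:ℝ)..0, Complex.exp (a * v) * triFn v =
        ((1 : ℂ) / a - 1 / a ^ 2 + Complex.exp (-a) / a ^ 2) := by
      rw [intervalIntegral.integral_congr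
        (g := fun x : ℝ => ((1:ℂ) + 1 * (x:ℂ)) * Complex.exp (a * (x:ℂ)))]
      · rw [lin_exp a 1 1 ha]
        push_cast
        rw [show a * (-1:ℂ) = -a by ring]
        first
        | (field_simp; ring)
        | field_simp
        rw [Complex.exp_zero]; ring
      · intro x hx
        rw [Set.uIcc_of_le (by norm_num)] at hx
        have ht : triFn x = 1 + (x:ℂ) := by
          simp only [triFn]
          rw [_root_.abs_of_nonpos hx.2, max_eq_right (by linarith [hx.1] : (0:ℝ) ≤ 1 - -x)]
          push_cast; ring
        show Complex.exp _ * triFn x = _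
        rw [ht]; ring
    have p3 : ∫ v in (0:ℝ)..1, Complex.exp (a * v) * triFn v =
        Complex.exp a / a ^ 2 - ((1:ℂ) / a + 1 / a ^ 2) := by
      rw [intervalIntegral.integral_congr
        (g := fun x : ℝ => ((1:ℂ) + (-1) * (x:ℂ)) * Complex.exp (a * (x:ℂ)))]
      · rw [lin_exp a 1 (-1) ha]
        push_cast
        rw [show a * (1:ℂ) = a by ring]
        first
        | (field_simp; ring)
        | field_simp
        rw [Complex.exp_zero]; ring
      · intro x hx
        rw [Set.uIcc_of_le (by norm_num)] at hx
        have ht : triFn x = 1 - (x:ℂ) := by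
          simp only [triFn]
          rw [_root_.abs_of_nonneg hx.1, max_eq_right (by linarith [hx.2] : (0:ℝ) ≤ 1 - x)]
          push_cast; ring
        show Complex.exp _ * triFn x = _
        rw [ht]; ring
    rw [key, split, p1, p2, p3]
    have hexp1 : Complex.exp a = (Real.cos (2*π*ξ) : ℂ) - (Real.sin (2*π*ξ) : ℂ) * Complex.I := by
      rw [ha_def]
      rw [show ((-2 * π * ξ : ℝ) : ℂ) * Complex.I = ((-(2*π*ξ) : ℝ) : ℂ) * Complex.I by
        push_cast; ring]
      rw [Complex.exp_mul_I]
      push_cast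
      simp
      ring
    have hexp2 : Complex.exp (-a) = (Real.cos (2*π*ξ) : ℂ) + (Real.sin (2*π*ξ) : ℂ) * Complex.I := by
      rw [ha_def]
      rw [show -(((-2 * π * ξ : ℝ) : ℂ) * Complex.I) = (((2*π*ξ) : ℝ) : ℂ) * Complex.I by
        push_cast; ring]
      rw [Complex.exp_mul_I]
      push_cast
      simp
    have hcos : Real.cos (2*π*ξ) = 1 - 2 * Real.sin (π*ξ)^2 := by
      have h := Real.sin_sq_add_cos_sq (π*ξ)
      rw [show 2*π*ξ = 2*(π*ξ) by ring, Real.cos_two_mul]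
      nlinarith
    have ha2 : a^2 = -(((2*π*ξ:ℝ):ℂ))^2 := by
      rw [ha_def]
      rw [mul_pow, Complex.I_sq]
      push_cast; ring
    have hsum := sum_eq a (Complex.exp a) (Complex.exp (-a))
    have hnum : Complex.exp a + Complex.exp (-a) - 2
        = ((-4 * Real.sin (π*ξ)^2 : ℝ) : ℂ) := by
      rw [hexp1, hexp2, hcos]; push_cast; ring
    rw [hsum, hnum, ha2, sinc2, if_neg hξ]
    have hπ' : (π:ℂ) ≠ 0 := Complex.ofReal_ne_zero.mpr Real.pi_ne_zero
    have hξ' : (ξ:ℂ) ≠ 0 := Complex.ofReal_ne_zero.mpr hξ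
    push_cast
    field_simp
    ring

lemma sinc2_bound (ξ : ℝ) : ‖sinc2 ξ‖ ≤ 2 * (1 + ξ^2)⁻¹ := by
  rcases eq_or_ne ξ 0 with rfl | hξ
  · simp [sinc2]
  · have hπξ : (0:ℝ) < (π * ξ)^2 := by positivity
    have h1 : Real.sin (π*ξ)^2 ≤ 1 := Real.sin_sq_le_one _
    have h2 : Real.sin (π*ξ)^2 ≤ (π*ξ)^2 := Real.sin_sq_le_sq
    have hπ2 : (1:ℝ) ≤ π^2 := by nlinarith [Real.pi_gt_three]
    have hnorm : ‖sinc2 ξ‖ = Real.sin (π*ξ)^2 / (π*ξ)^2 := by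
      rw [sinc2, if_neg hξ, norm_pow, Complex.norm_real, Real.norm_eq_abs, ← div_pow,
        _root_.sq_abs, div_pow]
    rw [hnorm, div_le_iff₀ hπξ]
    rw [show 2 * (1 + ξ^2)⁻¹ * (π*ξ)^2 = 2 * (π*ξ)^2 / (1 + ξ^2) by ring]
    rw [le_div_iff₀ (by positivity)]
    nlinarith [sq_nonneg ξ, mul_le_mul_of_nonneg_right h1 (sq_nonneg ξ)]

lemma sinc2_eq_fourier : sinc2 = 𝓕 triFn := (funext fourier_triFn).symm

lemma sinc2_cont : Continuous sinc2 := by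
  rw [sinc2_eq_fourier]
  exact VectorFourier.fourierIntegral_continuous Real.continuous_fourierChar
    (by simp; fun_prop) triFn_integrable

lemma sinc2_integrable : Integrable sinc2 := by
  apply Integrable.mono' (integrable_inv_one_add_sq.const_mul 2)
    sinc2_cont.aestronglyMeasurable
  exact Filter.Eventually.of_forall sinc2_bound

lemma sinc2_sq_integrable : Integrable (fun ξ => sinc2 ξ * sinc2 ξ) := by
  apply sinc2_integrable.bdd_mul (c := 2) sinc2_cont.aestronglyMeasurable
  refine Filter.Eventually.of_forall fun x => (sinc2_bound x).trans ?_
  have : (1 + x^2)⁻¹ ≤ 1 := by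
    rw [inv_le_one_iff₀]
    right
    nlinarith [sq_nonneg x]
  nlinarith

lemma fourier_sinc2 (x : ℝ) : 𝓕 sinc2 x = triFn x := by
  have hint : Integrable (𝓕 triFn) := by rw [← sinc2_eq_fourier]; exact sinc2_integrable
  rw [sinc2_eq_fourier]
  have h1 : 𝓕⁻ (𝓕 triFn) (-x) = triFn (-x) :=
    congrFun (triFn_cont.fourierInv_fourier_eq triFn_integrable hint) (-x)
  rw [Real.fourierInv_eq_fourier_neg, neg_neg] at h1
  rw [h1, triFn_neg]

lemma tri_sq_integral : ∫ x : ℝ, triFn x * triFn x = ((2/3 : ℝ) : ℂ) := by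
  have hsupp : Function.support (fun x : ℝ => triFn x * triFn x) ⊆ Set.Ioc (-2:ℝ) 1 := by
    intro v hv
    have h1 : triFn v ≠ 0 := by
      intro h
      apply hv
      simp [h]
    have hv2 := triFn_supp h1
    exact ⟨by have := hv2.1; linarith, hv2.2⟩
  rw [← intervalIntegral.integral_eq_integral_of_support_subset hsupp]
  have hii : ∀ t₀ t₁ : ℝ, IntervalIntegrable (fun x : ℝ => triFn x * triFn x) volume t₀ t₁ :=
    fun t₀ t₁ => (triFn_cont.mul triFn_cont).intervalIntegrable t₀ t₁
  rw [← intervalIntegral.integral_add_adjacent_intervals (hii (-2) (-1))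
      ((hii (-1) 0).trans (hii 0 1)),
    ← intervalIntegral.integral_add_adjacent_intervals (hii (-1) 0) (hii 0 1)]
  have q1 : ∫ v in (-2:ℝ)..(-1), triFn v * triFn v = 0 := by
    rw [intervalIntegral.integral_congr (g := fun _ => (0:ℂ))]
    · simp
    · intro x hx
      rw [Set.uIcc_of_le (by norm_num)] at hx
      have : triFn x = 0 := by
        simp only [triFn, Complex.ofReal_eq_zero]
        rw [max_eq_left]
        have : |x| ≥ 1 := by
          rw [_root_.abs_of_nonpos (by linarith [hx.2])]
          linarith [hx.2]
        linarith
      simp [this]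
  have q2 : ∫ v in (-1:ℝ)..0, triFn v * triFn v = ((1/3 : ℝ) : ℂ) := by
    rw [intervalIntegral.integral_congr (g := fun x : ℝ => (((1 + x)^2 : ℝ) : ℂ))]
    · rw [intervalIntegral.integral_ofReal]
      congr 1
      rw [show (fun x : ℝ => (1+x)^2) = (fun x : ℝ => (fun y => y^2) (1+x)) from rfl]
      rw [intervalIntegral.integral_comp_add_left (fun y : ℝ => y^2) 1]
      norm_num [integral_pow]
    · intro x hx
      rw [Set.uIcc_of_le (by norm_num)] at hx
      have ht : triFn x = ((1 + x : ℝ) : ℂ) := by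
        simp only [triFn]
        congr 1
        rw [_root_.abs_of_nonpos hx.2, max_eq_right (by linarith [hx.1] : (0:ℝ) ≤ 1 - -x)]
        ring
      show triFn x * triFn x = _
      rw [ht]
      push_cast
      ring
  have q3 : ∫ v in (0:ℝ)..1, triFn v * triFn v = ((1/3 : ℝ) : ℂ) := by
    rw [intervalIntegral.integral_congr (g := fun x : ℝ => (((1 - x)^2 : ℝ) : ℂ))]
    · rw [intervalIntegral.integral_ofReal]
      congr 1
      rw [show (fun x : ℝ => (1-x)^2) = (fun x : ℝ => (fun y => y^2) (1-x)) from rfl]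
      rw [intervalIntegral.integral_comp_sub_left (fun y : ℝ => y^2) 1]
      norm_num [integral_pow]
    · intro x hx
      rw [Set.uIcc_of_le (by norm_num)] at hx
      have ht : triFn x = ((1 - x : ℝ) : ℂ) := by
        simp only [triFn]
        congr 1
        rw [_root_.abs_of_nonneg hx.1, max_eq_right (by linarith [hx.2] : (0:ℝ) ≤ 1 - x)]
      show triFn x * triFn x = _
      rw [ht]
      push_cast
      ring
  rw [q1, q2, q3]
  push_cast
  ring

lemma sinc2_sq_integral : ∫ ξ : ℝ, sinc2 ξ * sinc2 ξ = ((2/3 : ℝ) : ℂ) := by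
  have h := VectorFourier.integral_fourierIntegral_smul_eq_flip
    (L := innerₗ ℝ) (μ := volume) (ν := volume)
    Real.continuous_fourierChar (by simp; fun_prop)
    triFn_integrable sinc2_integrable
  rw [flip_innerₗ] at h
  have hL : ∫ ξ : ℝ, sinc2 ξ * sinc2 ξ
      = ∫ ξ : ℝ, (VectorFourier.fourierIntegral (𝐞) volume (innerₗ ℝ) triFn ξ) • sinc2 ξ := by
    congr 1
    funext ξ
    rw [show VectorFourier.fourierIntegral (𝐞) volume (innerₗ ℝ) triFn ξ = 𝓕 triFn ξ from rfl,
      fourier_triFn, smul_eq_mul]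
  have hR : ∫ x : ℝ, triFn x • (VectorFourier.fourierIntegral (𝐞) volume (innerₗ ℝ) sinc2 x)
      = ∫ x : ℝ, triFn x * triFn x := by
    congr 1
    funext x
    rw [show VectorFourier.fourierIntegral (𝐞) volume (innerₗ ℝ) sinc2 x = 𝓕 sinc2 x from rfl,
      fourier_sinc2, smul_eq_mul]
  rw [hL, h, hR, tri_sq_integral]

lemma sinc4_integral : ∫ ξ : ℝ, sinc4 ξ = 2/3 := by
  have hcoe : ∀ ξ : ℝ, ((sinc4 ξ : ℝ) : ℂ) = sinc2 ξ * sinc2 ξ := by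
    intro ξ
    rcases eq_or_ne ξ 0 with rfl | hξ
    · simp [sinc4, sinc2]
    · rw [sinc4, sinc2, if_neg hξ, if_neg hξ]
      push_cast
      ring
  have h2 : ∫ ξ : ℝ, ((sinc4 ξ : ℝ) : ℂ) = ((2/3 : ℝ) : ℂ) := by
    rw [show (fun ξ : ℝ => ((sinc4 ξ : ℝ) : ℂ)) = fun ξ => sinc2 ξ * sinc2 ξ from funext hcoe]
    exact sinc2_sq_integral
  have h3 : ((∫ ξ : ℝ, sinc4 ξ : ℝ) : ℂ) = ((2/3 : ℝ) : ℂ) :=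
    (_root_.integral_ofReal).symm.trans h2
  exact_mod_cast h3

end Aux

/-- The density `f_P(z) = (3/(8π))·(sin(z/4)/(z/4))⁴`, defined at `z = 0` by its
limit value `3/(8π)`. -/
noncomputable def fP (z : ℝ) : ℝ :=
  if z = 0 then 3 / (8 * π) else 3 / (8 * π) * (Real.sin (z / 4) / (z / 4)) ^ 4

/-- `f_P` is a probability density function: it is nonnegative and integrates to 1. -/
theorem fP_is_density :
    (∀ z : ℝ, 0 ≤ fP z) ∧ ∫ z : ℝ, fP z = 1 := by
  constructor
  · intro z
    rw [fP]
    split <;> positivity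
  · have hfP : ∀ z : ℝ, fP z = 3 / (8 * π) * sinc4 (z / (4 * π)) := by
      intro z
      rcases eq_or_ne z 0 with rfl | hz
      · simp [fP, sinc4]
      · have hz4 : z / (4 * π) ≠ 0 := by
          simp [hz, Real.pi_ne_zero]
        rw [fP, if_neg hz, sinc4, if_neg hz4]
        congr 3
        · congr 1
          field_simp
        · field_simp
    simp only [hfP]
    rw [MeasureTheory.integral_const_mul]
    rw [MeasureTheory.Measure.integral_comp_div sinc4 (4 * π)]
    rw [sinc4_integral]
    rw [abs_of_pos (by positivity)]
    rw [smul_eq_mul]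
    field_simp
    ring
end
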